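/- Let (W,D) be a propositional default theory, Δ ⊆ D a finite set of defaults, and E = Th(W ∪ Conseq(Δ)). Suppose (i) Δ is grounded, (ii) for every δ = (α : β₁,…,βₙ / γ) ∈ Δ, α ∈ E and ¬βᵢ ∉ E for all i, and (iii) for every δ = (α : β₁,…,βₙ / γ) ∈ D \ Δ, either α ∉ E or ¬βᵢ ∈ E for some i. Then E is an extension of (W,D) and Δ = GD(W,D,E) is its generating default set. -/

import Mathlib

/-- Propositional formulas over natural-number atoms. -/
inductive PForm where
  | atom : ℕ → PForm
  | neg : PForm → PForm
  | conj : PForm → PForm → PForm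
  | disj : PForm → PForm → PForm
deriving DecidableEq

/-- Satisfaction of a formula under a valuation. -/
def PForm.sat (v : ℕ → Prop) : PForm → Prop
  | .atom n => v n
  | .neg f => ¬ f.sat v
  | .conj f g => f.sat v ∧ g.sat v
  | .disj f g => f.sat v ∨ g.sat v

/-- Propositional deductive closure (semantic consequence). -/
def Th (S : Set PForm) : Set PForm :=
  {φ | ∀ v : ℕ → Prop, (∀ ψ ∈ S, ψ.sat v) → φ.sat v}

/-- Propositional entailment `S ⊢ φ`. -/
def Entails (S : Set PForm) (φ : PForm) : Prop := φ ∈ Th S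

/-- A default rule (α : β₁,…,βₙ / γ). -/
structure DRule where
  prereq : PForm
  justifs : List PForm
  conseq : PForm

/-- Consequents of a set of defaults. -/
def Conseq (Δ : Set DRule) : Set PForm := DRule.conseq '' Δ

/-- The defining properties of Γ(S): `T` contains `W`, is deductively closed,
and is closed under defaults applicable w.r.t. `S`. -/
def GammaClosed (W : Set PForm) (D : Set DRule) (S T : Set PForm) : Prop :=
  W ⊆ T ∧ Th T = T ∧
  ∀ δ ∈ D, δ.prereq ∈ T → (∀ β ∈ δ.justifs, PForm.neg β ∉ S) → δ.conseq ∈ T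

/-- Γ(S): the smallest set satisfying `GammaClosed`. -/
def Gamma (W : Set PForm) (D : Set DRule) (S : Set PForm) : Set PForm :=
  ⋂₀ {T | GammaClosed W D S T}

/-- Reiter extension: fixed point of Γ. -/
def IsExtension (W : Set PForm) (D : Set DRule) (E : Set PForm) : Prop :=
  Gamma W D E = E

/-- Generating default set of `E`. -/
def GD (W : Set PForm) (D : Set DRule) (E : Set PForm) : Set DRule :=
  {δ ∈ D | δ.prereq ∈ E ∧ ∀ β ∈ δ.justifs, PForm.neg β ∉ E}

/-- Groundedness of a (finite) set of defaults. -/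
def Grounded (W : Set PForm) (Δ : Set DRule) : Prop :=
  ∃ L : List DRule, L.Nodup ∧ {δ | δ ∈ L} = Δ ∧
    ∀ i (h : i < L.length),
      Entails (W ∪ Conseq {δ | δ ∈ L.take i}) (L.get ⟨i, h⟩).prereq


lemma Th_mono {S T : Set PForm} (h : S ⊆ T) : Th S ⊆ Th T := by
  intro φ hφ v hv
  exact hφ v (fun ψ hψ => hv ψ (h hψ))

lemma subset_Th (S : Set PForm) : S ⊆ Th S := fun φ hφ v hv => hv φ hφ

lemma Th_Th (S : Set PForm) : Th (Th S) = Th S := by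
  apply Set.Subset.antisymm
  · intro φ hφ v hv
    exact hφ v (fun ψ hψ => hψ v hv)
  · exact subset_Th _

theorem gadel_correctness_if
    (W : Set PForm) (D Δ : Set DRule) (hΔD : Δ ⊆ D) (hfin : Δ.Finite)
    (E : Set PForm) (hE : E = Th (W ∪ Conseq Δ))
    (hground : Grounded W Δ)
    (happ : ∀ δ ∈ Δ, δ.prereq ∈ E ∧ ∀ β ∈ δ.justifs, PForm.neg β ∉ E)
    (hblock : ∀ δ ∈ D \ Δ, δ.prereq ∉ E ∨ ∃ β ∈ δ.justifs, PForm.neg β ∈ E) :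
    IsExtension W D E ∧ Δ = GD W D E := by
  subst hE
  set E := Th (W ∪ Conseq Δ) with hEdef
  -- Δ = GD W D E
  have hGD : Δ = GD W D E := by
    apply Set.Subset.antisymm
    · intro δ hδ
      exact ⟨hΔD hδ, happ δ hδ⟩
    · rintro δ ⟨hδD, hpre, hjust⟩
      by_contra hδΔ
      rcases hblock δ ⟨hδD, hδΔ⟩ with h | ⟨β, hβ, hnβ⟩
      · exact h hpre
      · exact hjust β hβ hnβ
  -- E satisfies GammaClosed W D E E
  have hWE : W ⊆ E := fun φ hφ => subset_Th _ (Or.inl hφ)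
  have hCE : Conseq Δ ⊆ E := fun φ hφ => subset_Th _ (Or.inr hφ)
  have hclosedE : GammaClosed W D E E := by
    refine ⟨hWE, Th_Th _, ?_⟩
    intro δ hδD hpre hjust
    have hδΔ : δ ∈ Δ := by
      by_contra hδΔ
      rcases hblock δ ⟨hδD, hδΔ⟩ with h | ⟨β, hβ, hnβ⟩
      · exact h hpre
      · exact hjust β hβ hnβ
    exact hCE ⟨δ, hδΔ, rfl⟩
  constructor
  · apply Set.Subset.antisymm
    · intro φ hφ
      exact hφ E hclosedE
    · -- E ⊆ every GammaClosed set
      intro φ hφ T hT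
      rcases hT with ⟨hWT, hThT, hdef⟩
      rcases hground with ⟨L, _, hLΔ, hent⟩
      -- all consequents of L are in T
      have key : ∀ i (h : i < L.length), (L.get ⟨i, h⟩).conseq ∈ T := by
        intro i
        induction i using Nat.strong_induction_on with
        | _ i ih =>
          intro h
          have hsub : W ∪ Conseq {δ | δ ∈ L.take i} ⊆ T := by
            rintro ψ (hψ | ⟨δ, hδ, rfl⟩)
            · exact hWT hψ
            · rcases List.mem_iff_getElem.mp hδ with ⟨j, hj, hje⟩
              have hj' : j < i := lt_of_lt_of_le hj (by simp [List.length_take])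
              have hjL : j < L.length := lt_of_lt_of_le hj (by simp [List.length_take])
              have : (L.take i)[j] = L[j] := List.getElem_take
              rw [this] at hje
              have := ih j hj' hjL
              simpa [List.get_eq_getElem, hje] using this
          have hpreT : (L.get ⟨i, h⟩).prereq ∈ T := by
            have := hent i h
            have : (L.get ⟨i, h⟩).prereq ∈ Th T := Th_mono hsub this
            rwa [hThT] at this
          have hδΔ : L.get ⟨i, h⟩ ∈ Δ := by
            rw [← hLΔ]; exact L.get_mem ⟨i, h⟩
          exact hdef _ (hΔD hδΔ) hpreT (happ _ hδΔ).2
      -- hence Conseq Δ ⊆ T, so E ⊆ T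
      have hCT : W ∪ Conseq Δ ⊆ T := by
        rintro ψ (hψ | ⟨δ, hδ, rfl⟩)
        · exact hWT hψ
        · rw [← hLΔ] at hδ
          rcases List.mem_iff_getElem.mp hδ with ⟨j, hj, hje⟩
          have := key j hj
          simpa [List.get_eq_getElem, hje] using this
      have : φ ∈ Th T := Th_mono hCT hφ
      rwa [hThT] at this
  · exact hGD
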